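/- Fix integers 2 ≤ k and k ≤ C, a unit vector v ∈ EuclideanSpace ℝ (Fin m), labels y : Fin k and y' : Fin C, and λ > 0. With M_k(λ) denoting the supremum, over classifiers W : Fin k → EuclideanSpace ℝ (Fin m) with ∑_z ‖W z‖ ≤ λ, of the Frobenius norm of the gradient of W ↦ ℓ(Wv, y) (k-class cross-entropy at label y), and M_C(λ) defined analogously for C classes at label y', there exists a constant c > 0 depending only on k such that M_C(λ) - M_k(λ) ≤ sqrt(2) - f_k(λ) ≤ c · e^{-λ}, where f_k(λ) = sqrt( (e^λ + k - 2)² + e^{2λ} + k - 2 ) / (e^λ + k - 1). In words: the supremal classifier-gradient norm of the global C-class (pre-training) cross-entropy exceeds that of the k-class (GLS) cross-entropy by at most an amount decreasing exponentially in λ. -/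
import Mathlib


open RealInnerProductSpace

/-- The softmax of a score vector. -/
noncomputable def softmax (k : ℕ) (a : Fin k → ℝ) (z : Fin k) : ℝ :=
  Real.exp (a z) / ∑ w : Fin k, Real.exp (a w)

/-- The Frobenius norm of the gradient of `W ↦ ℓ(Wv, y)` with respect to the classifier `W`:
the `z`-th row of the gradient is `(softmax(Wv)_z - δ_{z y}) • v`. -/
noncomputable def classifierGradNorm (k m : ℕ) (v : EuclideanSpace ℝ (Fin m)) (y : Fin k)
    (W : Fin k → EuclideanSpace ℝ (Fin m)) : ℝ :=
  Real.sqrt (∑ z : Fin k,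
    ‖(softmax k (fun w => ⟪W w, v⟫) z - if z = y then 1 else 0) • v‖ ^ 2)

/-- The supremal classifier-gradient norm over the `(2,1)`-norm ball of radius `λ`. -/
noncomputable def supGradNorm (k m : ℕ) (v : EuclideanSpace ℝ (Fin m)) (y : Fin k)
    (lam : ℝ) : ℝ :=
  sSup { r : ℝ | ∃ W : Fin k → EuclideanSpace ℝ (Fin m),
    (∑ z : Fin k, ‖W z‖) ≤ lam ∧ r = classifierGradNorm k m v y W }

/-- The gradient-norm value
`f_k(λ) = √((e^λ + k - 2)² + e^{2λ} + k - 2) / (e^λ + k - 1)`. -/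
noncomputable def fGrad (k : ℕ) (lam : ℝ) : ℝ :=
  Real.sqrt ((Real.exp lam + k - 2) ^ 2 + Real.exp (2 * lam) + k - 2) /
    (Real.exp lam + k - 1)

/-! ### Auxiliary lemmas -/

lemma softmax_nonneg (k : ℕ) (hk : 0 < k) (a : Fin k → ℝ) (z : Fin k) :
    0 ≤ softmax k a z := by
  haveI : NeZero k := ⟨hk.ne'⟩
  have hS : 0 < ∑ w : Fin k, Real.exp (a w) :=
    Finset.sum_pos (fun _ _ => Real.exp_pos _) Finset.univ_nonempty
  exact div_nonneg (Real.exp_pos _).le hS.le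

lemma softmax_le_one (k : ℕ) (hk : 0 < k) (a : Fin k → ℝ) (z : Fin k) :
    softmax k a z ≤ 1 := by
  haveI : NeZero k := ⟨hk.ne'⟩
  have hS : 0 < ∑ w : Fin k, Real.exp (a w) :=
    Finset.sum_pos (fun _ _ => Real.exp_pos _) Finset.univ_nonempty
  rw [softmax, div_le_one hS]
  exact Finset.single_le_sum (fun w _ => (Real.exp_pos (a w)).le) (Finset.mem_univ z)

lemma softmax_sum_one (k : ℕ) (hk : 0 < k) (a : Fin k → ℝ) :
    ∑ z : Fin k, softmax k a z = 1 := by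
  haveI : NeZero k := ⟨hk.ne'⟩
  have hS : 0 < ∑ w : Fin k, Real.exp (a w) :=
    Finset.sum_pos (fun _ _ => Real.exp_pos _) Finset.univ_nonempty
  simp only [softmax]
  rw [← Finset.sum_div, div_self hS.ne']

/-- Any classifier gradient has Frobenius norm at most `√2`. -/
lemma gradNorm_le (k m : ℕ) (hk : 0 < k) (v : EuclideanSpace ℝ (Fin m)) (hv : ‖v‖ = 1)
    (y : Fin k) (W : Fin k → EuclideanSpace ℝ (Fin m)) :
    classifierGradNorm k m v y W ≤ Real.sqrt 2 := by
  apply Real.sqrt_le_sqrt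
  set a := fun w => ⟪W w, v⟫ with ha
  have hterm : ∀ z : Fin k, ‖(softmax k a z - if z = y then 1 else 0) • v‖ ^ 2
      = (softmax k a z - if z = y then 1 else 0) ^ 2 := by
    intro z; rw [norm_smul, hv, mul_one, Real.norm_eq_abs, sq_abs]
  simp only [hterm]
  rw [Fintype.sum_eq_add_sum_compl y]
  have h1 : (softmax k a y - if y = y then 1 else 0) ^ 2 ≤ 1 := by
    rw [if_pos rfl]
    nlinarith [softmax_nonneg k hk a y, softmax_le_one k hk a y]
  have h2 : ∑ z ∈ ({y}ᶜ : Finset (Fin k)), (softmax k a z - if z = y then 1 else 0) ^ 2 ≤ 1 := by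
    calc ∑ z ∈ ({y}ᶜ : Finset (Fin k)), (softmax k a z - if z = y then 1 else 0) ^ 2
        ≤ ∑ z ∈ ({y}ᶜ : Finset (Fin k)), softmax k a z := by
          apply Finset.sum_le_sum
          intro z hz
          have hzy : z ≠ y := by simpa using Finset.mem_compl.mp hz
          rw [if_neg hzy, sub_zero]
          nlinarith [softmax_nonneg k hk a z, softmax_le_one k hk a z]
      _ ≤ ∑ z : Fin k, softmax k a z := by
          apply Finset.sum_le_sum_of_subset_of_nonneg (Finset.subset_univ _)
          intro z _ _; exact softmax_nonneg k hk a z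
      _ = 1 := softmax_sum_one k hk a
  linarith

/-- The value `f_k(λ)` is attained within the radius-`λ` `(2,1)`-ball. -/
lemma exists_attain (k m : ℕ) (hk : 2 ≤ k) (v : EuclideanSpace ℝ (Fin m)) (hv : ‖v‖ = 1)
    (y : Fin k) (lam : ℝ) (hlam : 0 < lam) :
    ∃ W : Fin k → EuclideanSpace ℝ (Fin m),
      (∑ z : Fin k, ‖W z‖) ≤ lam ∧ fGrad k lam = classifierGradNorm k m v y W := by
  haveI : NeZero k := ⟨by omega⟩
  have hcard : 1 < Fintype.card (Fin k) := by simpa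
  obtain ⟨z₀, hz₀y⟩ := Fintype.exists_ne_of_one_lt_card hcard y
  set E := Real.exp lam with hE
  have hE1 : 1 < E := by
    rw [hE]; exact Real.one_lt_exp_iff.mpr hlam
  have hk2 : (2:ℝ) ≤ (k:ℝ) := by exact_mod_cast hk
  set S : ℝ := E + (k:ℝ) - 1 with hSdef
  have hS0 : 0 < S := by linarith
  refine ⟨fun z => if z = z₀ then lam • v else 0, ?_, ?_⟩
  · have hn : ∀ z : Fin k, ‖(if z = z₀ then lam • v else 0 : EuclideanSpace ℝ (Fin m))‖
        = if z = z₀ then lam else 0 := by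
      intro z
      by_cases h : z = z₀ <;> simp [h, norm_smul, hv, abs_of_pos hlam]
    simp only [hn]
    rw [Finset.sum_ite_eq' Finset.univ z₀ (fun _ => lam)]
    simp
  · have ha : ∀ w : Fin k, ⟪(if w = z₀ then lam • v else 0 : EuclideanSpace ℝ (Fin m)), v⟫
        = if w = z₀ then lam else 0 := by
      intro w
      by_cases h : w = z₀
      · rw [if_pos h, if_pos h, real_inner_smul_left, real_inner_self_eq_norm_sq, hv]
        ring
      · rw [if_neg h, if_neg h, inner_zero_left]
    have hSum : ∑ w : Fin k,
        Real.exp ⟪(if w = z₀ then lam • v else 0 : EuclideanSpace ℝ (Fin m)), v⟫ = S := by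
      simp only [ha]
      rw [Fintype.sum_eq_add_sum_compl z₀]
      rw [if_pos rfl]
      have : ∀ w ∈ ({z₀}ᶜ : Finset (Fin k)), Real.exp (if w = z₀ then lam else 0) = 1 := by
        intro w hw
        have : w ≠ z₀ := by simpa using Finset.mem_compl.mp hw
        simp [this]
      rw [Finset.sum_congr rfl this, Finset.sum_const, nsmul_eq_mul, mul_one,
        Finset.card_compl, Finset.card_singleton, Fintype.card_fin,
        Nat.cast_sub (by omega : 1 ≤ k)]
      push_cast [hSdef]
      ring
    have hsm : ∀ z : Fin k,
        softmax k (fun w => ⟪(if w = z₀ then lam • v else 0 : EuclideanSpace ℝ (Fin m)), v⟫) z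
        = (if z = z₀ then E else 1) / S := by
      intro z
      rw [softmax, hSum, ha]
      by_cases h : z = z₀ <;> simp [h, hE]
    unfold classifierGradNorm
    have hterm : ∀ z : Fin k,
        ‖((if z = z₀ then E else 1) / S - if z = y then 1 else 0) • v‖ ^ 2
        = ((if z = z₀ then E else 1) / S - if z = y then 1 else 0) ^ 2 := by
      intro z; rw [norm_smul, hv, mul_one, Real.norm_eq_abs, sq_abs]
    simp only [hsm, hterm]
    -- split the sum
    have hsub : ({z₀, y} : Finset (Fin k)) ⊆ Finset.univ := Finset.subset_univ _
    rw [← Finset.sum_sdiff hsub, Finset.sum_pair hz₀y]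
    have hdiff : ∑ z ∈ Finset.univ \ ({z₀, y} : Finset (Fin k)),
        ((if z = z₀ then E else 1) / S - if z = y then 1 else 0) ^ 2
        = ((k:ℝ) - 2) * (1 / S) ^ 2 := by
      have hc : ∀ z ∈ Finset.univ \ ({z₀, y} : Finset (Fin k)),
          ((if z = z₀ then E else 1) / S - if z = y then 1 else 0) ^ 2 = (1 / S) ^ 2 := by
        intro z hz
        simp only [Finset.mem_sdiff, Finset.mem_insert, Finset.mem_singleton] at hz
        push_neg at hz
        simp [hz.2.1, hz.2.2]
      rw [Finset.sum_congr rfl hc, Finset.sum_const]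
      have hcard2 : (Finset.univ \ ({z₀, y} : Finset (Fin k))).card = k - 2 := by
        rw [Finset.card_sdiff_of_subset hsub, Finset.card_pair hz₀y]
        simp
      rw [hcard2, nsmul_eq_mul, Nat.cast_sub hk]
      norm_num
    rw [hdiff]
    have hz₀ : ((if z₀ = z₀ then E else 1) / S - if z₀ = y then 1 else 0) ^ 2 = (E / S) ^ 2 := by
      simp [hz₀y]
    have hy : ((if y = z₀ then E else 1) / S - if y = y then 1 else 0) ^ 2 = (1 / S - 1) ^ 2 := by
      simp [Ne.symm hz₀y]
    rw [hz₀, hy]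
    have key : (E + (k:ℝ) - 2) ^ 2 + Real.exp (2 * lam) + (k:ℝ) - 2
        = ((E / S) ^ 2 + (1 / S - 1) ^ 2 + ((k:ℝ) - 2) * (1 / S) ^ 2) * S ^ 2 := by
      have h2 : Real.exp (2 * lam) = E ^ 2 := by rw [two_mul, Real.exp_add, hE, sq]
      rw [h2]
      field_simp
      ring
    rw [fGrad, ← hE]
    rw [show (Real.exp lam + (k:ℝ) - 1) = S from rfl]
    rw [key, Real.sqrt_mul' _ (by positivity), Real.sqrt_sq hS0.le,
      mul_div_assoc, div_self hS0.ne', mul_one]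
    ring_nf

lemma core_bound (kk E : ℝ) (hk2 : 2 ≤ kk) (hE1 : 1 < E) :
    Real.sqrt 2 - Real.sqrt ((E + kk - 2) ^ 2 + E ^ 2 + kk - 2) / (E + kk - 1)
      ≤ (kk ^ 2 + kk) / E := by
  have hE0 : (0:ℝ) < E := by linarith
  set N : ℝ := E + kk - 1 with hN
  have hN0 : 0 < N := by rw [hN]; linarith
  set A : ℝ := (E + kk - 2) ^ 2 + E ^ 2 + kk - 2 with hA
  have hA0 : 0 ≤ A := by rw [hA]; nlinarith [sq_nonneg (E + kk - 2)]
  set f := Real.sqrt A / N with hfd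
  have hf0 : 0 ≤ f := div_nonneg (Real.sqrt_nonneg _) hN0.le
  have hfsq : f ^ 2 = A / N ^ 2 := by rw [hfd, div_pow, Real.sq_sqrt hA0]
  clear_value f A N
  have hdiff : 2 - f ^ 2 = (2 * kk * E + kk ^ 2 - kk) / N ^ 2 := by
    have hn2 : (N:ℝ) ^ 2 ≠ 0 := pow_ne_zero 2 hN0.ne'
    rw [hfsq, hA, eq_div_iff hn2, sub_mul, div_mul_cancel₀ _ hn2, hN]
    ring
  have hf2 : f ^ 2 ≤ 2 := by
    rw [hfsq, div_le_iff₀ (by positivity), hA, hN]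
    nlinarith
  have hfle : f ≤ Real.sqrt 2 := (Real.le_sqrt hf0 (by norm_num)).mpr hf2
  have hsq2 : Real.sqrt 2 ^ 2 = 2 := Real.sq_sqrt (by norm_num)
  have h1s : (1:ℝ) ≤ Real.sqrt 2 := by nlinarith [Real.sqrt_nonneg 2]
  have step1 : Real.sqrt 2 - f ≤ 2 - f ^ 2 := by
    nlinarith [mul_nonneg (sub_nonneg.2 hfle)
      (show (0:ℝ) ≤ Real.sqrt 2 + f - 1 by linarith)]
  have step2 : (2 * kk * E + kk ^ 2 - kk) / N ^ 2 ≤ (kk ^ 2 + kk) / E := by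
    rw [div_le_div_iff₀ (by positivity) hE0]
    have hNE : E ≤ N := by rw [hN]; linarith
    have hsq : (0:ℝ) ≤ N ^ 2 - E ^ 2 := by nlinarith
    have hkk : (0:ℝ) ≤ kk ^ 2 - kk := by nlinarith
    have p1 : (0:ℝ) ≤ (kk ^ 2 + kk) * (N ^ 2 - E ^ 2) := mul_nonneg (by nlinarith) hsq
    have p2 : (0:ℝ) ≤ (kk ^ 2 - kk) * E * (E - 1) :=
      mul_nonneg (mul_nonneg hkk hE0.le) (by linarith)
    nlinarith [p1, p2]
  linarith [hdiff ▸ step1]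

lemma sqrt2_sub_fGrad_le (k : ℕ) (hk : 2 ≤ k) (lam : ℝ) (hlam : 0 < lam) :
    Real.sqrt 2 - fGrad k lam ≤ ((k:ℝ) ^ 2 + k) * Real.exp (-lam) := by
  have hk2 : (2:ℝ) ≤ (k:ℝ) := by exact_mod_cast hk
  have hE1 : 1 < Real.exp lam := Real.one_lt_exp_iff.mpr hlam
  have h2 : Real.exp (2 * lam) = Real.exp lam ^ 2 := by rw [two_mul, Real.exp_add, sq]
  have hrw : fGrad k lam
      = Real.sqrt ((Real.exp lam + (k:ℝ) - 2) ^ 2 + Real.exp lam ^ 2 + (k:ℝ) - 2)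
        / (Real.exp lam + (k:ℝ) - 1) := by rw [fGrad, h2]
  have hneg : Real.exp (-lam) = 1 / Real.exp lam := by
    rw [Real.exp_neg, one_div]
  have := core_bound (k:ℝ) (Real.exp lam) hk2 hE1
  rw [hrw, hneg, ← div_eq_mul_one_div]
  exact this

/-- The supremal classifier-gradient norm of the global `C`-class
(pre-training) cross-entropy exceeds that of the `k`-class (GLS) cross-entropy by at most
`√2 - f_k(λ) ≤ c e^{-λ}`, an amount decreasing exponentially in `λ`, where `c > 0` depends
only on `k`. -/
theorem supGradNorm_global_sub_le_exponential
    (k C m : ℕ) (hk : 2 ≤ k) (hkC : k ≤ C) (hm : 0 < m)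
    (v : EuclideanSpace ℝ (Fin m)) (hv : ‖v‖ = 1)
    (y : Fin k) (y' : Fin C) :
    ∃ c > (0 : ℝ), ∀ lam > (0 : ℝ),
      supGradNorm C m v y' lam - supGradNorm k m v y lam ≤ Real.sqrt 2 - fGrad k lam ∧
      Real.sqrt 2 - fGrad k lam ≤ c * Real.exp (-lam) := by
  have hk2 : (2:ℝ) ≤ (k:ℝ) := by exact_mod_cast hk
  refine ⟨(k:ℝ) ^ 2 + k, by nlinarith, ?_⟩
  intro lam hlam
  constructor
  · have hC0 : 0 < C := by omega
    have hle : supGradNorm C m v y' lam ≤ Real.sqrt 2 := by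
      apply Real.sSup_le _ (Real.sqrt_nonneg 2)
      rintro r ⟨W, -, rfl⟩
      exact gradNorm_le C m hC0 v hv y' W
    obtain ⟨W, hW1, hW2⟩ := exists_attain k m hk v hv y lam hlam
    have hbdd : BddAbove { r : ℝ | ∃ W : Fin k → EuclideanSpace ℝ (Fin m),
        (∑ z : Fin k, ‖W z‖) ≤ lam ∧ r = classifierGradNorm k m v y W } := by
      refine ⟨Real.sqrt 2, ?_⟩
      rintro r ⟨W', -, rfl⟩
      exact gradNorm_le k m (by omega) v hv y W'
    have hge : fGrad k lam ≤ supGradNorm k m v y lam :=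
      le_csSup hbdd ⟨W, hW1, hW2⟩
    linarith
  · exact sqrt2_sub_fGrad_le k hk lam hlam
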